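/- arXiv:1512.05794 — 2 statements merged into one kernel-verified Lean document; each statement's English description precedes it below -/
import Mathlib

section
/- Let d ≥ 1 be an integer and let Λ ⊂ ℝ^d be a full-rank lattice (a discrete subgroup spanning ℝ^d) of covolume 1. Then there exists a constant γ(Λ) ∈ ℝ such that, as R → ∞, Σ_{v ∈ Λ, 0 < ‖v‖ ≤ R} ‖v‖^{−d} = (2π^{d/2}/Γ(d/2)) · (log R + γ(Λ)) + o(1), where ‖·‖ is the Euclidean norm. (When d = 1 and Λ = ℤ, γ(Λ) is the Euler–Mascheroni constant.) -/
/-!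
Let `N t` be the number of nonzero lattice vectors of norm at most `t`. The translates of a
fundamental domain `D ⊆ closedBall 0 ρ` of volume `1` by the lattice tile the space, so `N t + 1` is
trapped between the volumes of the balls of radii `t - ρ` and `t + ρ`; hence
`N t = ω tᵈ + O(tᵈ⁻¹)` with `ω` the volume of the unit ball. Abel summation writes the lattice sum
as `N R R⁻ᵈ + ∫_{r₀}^R N t · d t⁻ᵈ⁻¹ dt`, where `r₀` is below the minimal norm. The main term
`ω tᵈ` of `N` contributes `d ω log R`, and the error term contributes `O(t⁻²)` to the integrand, so
its integral converges. Finally `d ω = 2 π^{d/2} / Γ(d/2)`.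
-/

open MeasureTheory Filter Real Set Asymptotics Topology Metric Module
open scoped Finset Pointwise ENNReal

theorem rpow_neg_eq_add_integral {a R σ : ℝ} (ha : 0 < a) (haR : a ≤ R) :
    a ^ (-σ) = R ^ (-σ) + ∫ t in a..R, σ * t ^ (-σ - 1) := by
  have hpos : ∀ t ∈ uIcc a R, 0 < t := fun t ht => ha.trans_le (uIcc_of_le haR ▸ ht).1
  rw [intervalIntegral.integral_eq_sub_of_hasDerivAt (f := fun t => -t ^ (-σ))]
  · ring
  · intro t ht
    convert (hasDerivAt_rpow_const (p := -σ) (Or.inl (hpos t ht).ne')).fun_neg using 1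
    ring
  · refine ContinuousOn.intervalIntegrable fun t ht => ?_
    exact (continuousAt_const.mul
      (continuousAt_rpow_const _ _ (Or.inl (hpos t ht).ne'))).continuousWithinAt

theorem sum_integral_eq_integral_card_filter_mul {ι : Type*} (s : Finset ι) (f : ι → ℝ)
    {g : ℝ → ℝ} {a b : ℝ} (hab : a ≤ b) (hf : ∀ i ∈ s, f i ∈ Ioc a b)
    (hg : IntegrableOn g (Ioc a b)) :
    ∑ i ∈ s, ∫ t in f i..b, g t = ∫ t in a..b, #{i ∈ s | f i ≤ t} * g t := by
  have hind : ∀ i ∈ s, ∫ t in f i..b, g t = ∫ t in a..b, (Ici (f i)).indicator g t := by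
    intro i hi
    obtain ⟨hai, hib⟩ := hf i hi
    have hIcc : Ioc a b ∩ Ici (f i) = Icc (f i) b := by
      ext t
      simp only [mem_inter_iff, mem_Ioc, mem_Ici, mem_Icc]
      exact ⟨fun ⟨⟨_, h₂⟩, h₃⟩ => ⟨h₃, h₂⟩, fun ⟨h₁, h₂⟩ => ⟨⟨hai.trans_le h₁, h₂⟩, h₁⟩⟩
    rw [intervalIntegral.integral_of_le hib, intervalIntegral.integral_of_le hab,
      setIntegral_indicator measurableSet_Ici, hIcc, integral_Icc_eq_integral_Ioc]
  rw [Finset.sum_congr rfl hind, ← intervalIntegral.integral_finsetSum]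
  · congr 1 with t
    simp only [indicator_apply, mem_Ici, Finset.sum_ite, Finset.sum_const_zero, add_zero,
      Finset.sum_const, nsmul_eq_mul]
  · intro i _
    exact (intervalIntegrable_iff_integrableOn_Ioc_of_le hab).2 (hg.indicator measurableSet_Ici)

theorem finsum_rpow_neg_eq_add_integral {α : Type*} {p : α → Prop} {f : α → ℝ} {r₀ R σ : ℝ}
    (hr₀ : 0 < r₀) (hf : ∀ x, p x → r₀ < f x) (hR : r₀ ≤ R) (hfin : {x | p x ∧ f x ≤ R}.Finite) :
    ∑ᶠ (x : α) (_ : p x ∧ f x ≤ R), f x ^ (-σ) = {x | p x ∧ f x ≤ R}.ncard * R ^ (-σ)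
      + ∫ t in r₀..R, ({x | p x ∧ f x ≤ t}.ncard : ℝ) * (σ * t ^ (-σ - 1)) := by
  classical
  have hmem : ∀ x ∈ hfin.toFinset, f x ∈ Ioc r₀ R := fun x hx =>
    ⟨hf x (hfin.mem_toFinset.1 hx).1, (hfin.mem_toFinset.1 hx).2⟩
  have hk : IntegrableOn (fun t => σ * t ^ (-σ - 1)) (Ioc r₀ R) :=
    (ContinuousOn.integrableOn_Icc fun t ht => (continuousAt_const.mul (continuousAt_rpow_const
      _ _ (Or.inl (hr₀.trans_le ht.1).ne'))).continuousWithinAt).mono_set Ioc_subset_Icc_self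
  have hcount : ∀ t ∈ uIcc r₀ R, (#{x ∈ hfin.toFinset | f x ≤ t} : ℝ)
      = ({x | p x ∧ f x ≤ t}.ncard : ℝ) := by
    intro t ht
    rw [uIcc_of_le hR] at ht
    rw [← ncard_coe_finset]
    congr 2
    ext x
    simp only [Finset.coe_filter, hfin.mem_toFinset, mem_ofPred_eq]
    exact ⟨fun ⟨⟨hx, _⟩, hxt⟩ => ⟨hx, hxt⟩, fun ⟨hx, hxt⟩ => ⟨⟨hx, hxt.trans ht.2⟩, hxt⟩⟩
  calc ∑ᶠ (x : α) (_ : p x ∧ f x ≤ R), f x ^ (-σ)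
      = ∑ x ∈ hfin.toFinset, (R ^ (-σ) + ∫ t in f x..R, σ * t ^ (-σ - 1)) :=
        (finsum_mem_eq_finite_toFinset_sum _ hfin).trans (Finset.sum_congr rfl fun x hx =>
          rpow_neg_eq_add_integral (hr₀.trans (hmem x hx).1) (hmem x hx).2)
    _ = _ := by
      rw [Finset.sum_add_distrib, Finset.sum_const, nsmul_eq_mul, ← ncard_eq_toFinset_card _ hfin,
        sum_integral_eq_integral_card_filter_mul _ _ hR hmem hk]
      exact congrArg _ (intervalIntegral.integral_congr fun t ht => by simp only [hcount t ht])

theorem abs_add_pow_sub_pow_le {t x ρ : ℝ} (hxρ : |x| ≤ ρ) (hρt : ρ ≤ t) (d : ℕ) :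
    |(t + x) ^ d - t ^ d| ≤ ρ * d * (2 * t) ^ (d - 1) := by
  have ht : 0 ≤ t := (abs_nonneg x).trans (hxρ.trans hρt)
  have hmax : max |t + x| |t| ≤ 2 * t := by
    refine max_le ((abs_add_le t x).trans ?_) ?_ <;> rw [abs_of_nonneg ht] <;> linarith
  calc |(t + x) ^ d - t ^ d| ≤ |t + x - t| * d * max |t + x| |t| ^ (d - 1) :=
        abs_pow_sub_pow_le _ _ _
    _ ≤ ρ * d * (2 * t) ^ (d - 1) := by
      have hρ : 0 ≤ ρ := (abs_nonneg x).trans hxρ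
      rw [add_sub_cancel_left]
      gcongr

theorem isBigO_sub_mul_pow_of_le_of_le {M : ℝ → ℝ} {ω ρ : ℝ} {d : ℕ} (hd : 1 ≤ d) (hω : 0 ≤ ω)
    (hρ : 0 ≤ ρ) (hlow : ∀ᶠ t in atTop, ω * (t - ρ) ^ d ≤ M t)
    (hup : ∀ᶠ t in atTop, M t ≤ ω * (t + ρ) ^ d) :
    (fun t => M t - ω * t ^ (d : ℝ)) =O[atTop] fun t => t ^ ((d : ℝ) - 1) := by
  refine IsBigO.of_bound (ω * (ρ * d * 2 ^ (d - 1))) ?_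
  filter_upwards [hlow, hup, eventually_ge_atTop ρ] with t hlow hup ht
  have ht0 : 0 ≤ t := hρ.trans ht
  have hplus := abs_add_pow_sub_pow_le (x := ρ) (abs_of_nonneg hρ).le ht d
  have hminus := abs_add_pow_sub_pow_le (x := -ρ) (by rw [abs_neg, abs_of_nonneg hρ]) ht d
  rw [← sub_eq_add_neg] at hminus
  rw [mul_pow, ← mul_assoc] at hplus hminus
  rw [rpow_natCast, norm_eq_abs, norm_eq_abs, abs_of_nonneg (rpow_nonneg ht0 _),
    ← Nat.cast_pred hd, rpow_natCast, ← mul_assoc, abs_le]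
  have h₁ := mul_le_mul_of_nonneg_left (abs_le.1 hplus).2 hω
  have h₂ := mul_le_mul_of_nonneg_left (abs_le.1 hminus).1 hω
  constructor <;> nlinarith

theorem integrableOn_Ioi_sub_mul_rpow_of_isBigO {N : ℝ → ℝ} {s ω r₀ : ℝ} (hr₀ : 0 < r₀)
    (hN : Monotone N) (hO : (fun t => N t - ω * t ^ s) =O[atTop] fun t => t ^ (s - 1)) :
    IntegrableOn (fun t => (N t - ω * t ^ s) * (s * t ^ (-s - 1))) (Ioi r₀) := by
  have hcont : ∀ p : ℝ, ContinuousOn (fun t : ℝ => t ^ p) (Ici r₀) := fun p t ht =>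
    (continuousAt_rpow_const _ _ (Or.inl (hr₀.trans_le ht).ne')).continuousWithinAt
  have hloc : LocallyIntegrableOn (fun t => (N t - ω * t ^ s) * (s * t ^ (-s - 1))) (Ici r₀) :=
    ((hN.locallyIntegrable.locallyIntegrableOn _).sub
      ((continuousOn_const.mul (hcont s)).locallyIntegrableOn measurableSet_Ici)).mul_continuousOn
      (continuousOn_const.mul (hcont _)) isClosed_Ici.isLocallyClosed
  have hO₂ : (fun t => (N t - ω * t ^ s) * (s * t ^ (-s - 1))) =O[atTop]
      fun t : ℝ => t ^ (-2 : ℝ) := by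
    refine (hO.mul (isBigO_refl (fun t : ℝ => s * t ^ (-s - 1)) atTop)).trans ?_
    refine (isBigO_const_mul_self s _ _).congr' ?_ EventuallyEq.rfl
    filter_upwards [eventually_gt_atTop 0] with t ht
    rw [mul_left_comm, ← rpow_add ht]
    ring_nf
  have hint : IntegrableAtFilter (fun t : ℝ => t ^ (-2 : ℝ)) atTop :=
    ⟨Ioi 1, Ioi_mem_atTop 1, integrableOn_Ioi_rpow_of_lt (by norm_num) one_pos⟩
  exact (hloc.integrableOn_of_isBigO_atTop hO₂ hint).mono_set Ioi_subset_Ici_self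

theorem tendsto_mul_rpow_neg_of_isBigO {N : ℝ → ℝ} {s ω : ℝ}
    (hO : (fun t => N t - ω * t ^ s) =O[atTop] fun t => t ^ (s - 1)) :
    Tendsto (fun R => N R * R ^ (-s)) atTop (𝓝 ω) := by
  have hO' : (fun R => N R * R ^ (-s) - ω) =O[atTop] fun R : ℝ => R ^ (-1 : ℝ) := by
    refine (hO.mul (isBigO_refl (fun R : ℝ => R ^ (-s)) atTop)).congr' ?_ ?_
    all_goals filter_upwards [eventually_gt_atTop 0] with R hR
    · rw [sub_mul, mul_assoc, ← rpow_add hR, add_neg_cancel, rpow_zero, mul_one]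
    · rw [← rpow_add hR]; ring_nf
  simpa using (hO'.trans_tendsto (tendsto_rpow_neg_atTop one_pos)).add_const ω

theorem exists_tendsto_add_integral_sub_log {N : ℝ → ℝ} {s ω r₀ : ℝ} (hr₀ : 0 < r₀)
    (hN : Monotone N) (hO : (fun t => N t - ω * t ^ s) =O[atTop] fun t => t ^ (s - 1)) :
    ∃ L, Tendsto (fun R => N R * R ^ (-s) + (∫ t in r₀..R, N t * (s * t ^ (-s - 1)))
      - s * ω * log R) atTop (𝓝 L) := by
  set err := fun t => (N t - ω * t ^ s) * (s * t ^ (-s - 1))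
  have herr := integrableOn_Ioi_sub_mul_rpow_of_isBigO hr₀ hN hO
  have hsplit : ∀ R ≥ r₀, (∫ t in r₀..R, N t * (s * t ^ (-s - 1)))
      = (∫ t in r₀..R, err t) + s * ω * (log R - log r₀) := by
    intro R hR
    have hpos : ∀ t ∈ uIcc r₀ R, 0 < t := fun t ht => hr₀.trans_le (uIcc_of_le hR ▸ ht).1
    have hlog : ∫ t in r₀..R, s * ω * t⁻¹ = s * ω * (log R - log r₀) := by
      rw [intervalIntegral.integral_const_mul, integral_inv (fun h => (hpos 0 h).false),
        log_div (hpos R right_mem_uIcc).ne' hr₀.ne']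
    rw [← hlog, ← intervalIntegral.integral_add]
    · refine intervalIntegral.integral_congr fun t ht => ?_
      have : t ^ s * t ^ (-s - 1) = t⁻¹ := by
        rw [← rpow_add (hpos t ht), show s + (-s - 1) = -1 by ring, rpow_neg_one]
      simp only [err]
      linear_combination (s * ω) * this
    · exact (intervalIntegrable_iff_integrableOn_Ioc_of_le hR).2
        (herr.mono_set Ioc_subset_Ioi_self)
    · exact (continuousOn_const.mul
        (continuousOn_inv₀.mono fun t ht => (hpos t ht).ne')).intervalIntegrable
  refine ⟨ω + (∫ t in Ioi r₀, err t) - s * ω * log r₀, ?_⟩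
  have hlim := (tendsto_mul_rpow_neg_of_isBigO hO).add
    (intervalIntegral_tendsto_integral_Ioi r₀ herr tendsto_id)
  refine (hlim.sub_const (s * ω * log r₀)).congr' ?_
  filter_upwards [eventually_ge_atTop r₀] with R hR
  rw [hsplit R hR]
  simp only [id]
  ring

instance Submodule.vaddInvariantMeasure {E : Type*} [AddCommGroup E] [MeasurableSpace E]
    {Λ : Submodule ℤ E} {μ : Measure E} [μ.IsAddLeftInvariant] : VAddInvariantMeasure Λ E μ :=
  (inferInstance : VAddInvariantMeasure Λ.toAddSubgroup E μ)

section Lattice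

variable {E : Type*} [NormedAddCommGroup E] (Λ : Submodule ℤ E)

theorem ZLattice.exists_pos_forall_lt_norm [DiscreteTopology Λ] :
    ∃ r > 0, ∀ v ∈ Λ, v ≠ 0 → r < ‖v‖ := by
  obtain ⟨ε, hε, hball⟩ := Metric.isOpen_iff.1 (isOpen_discrete ({0} : Set Λ)) 0 rfl
  refine ⟨ε / 2, half_pos hε, fun v hv hv0 => lt_of_lt_of_le (half_lt_self hε) ?_⟩
  by_contra! h
  have : (⟨v, hv⟩ : Λ) = 0 := hball (mem_ball_zero_iff.2 h)
  exact hv0 (congrArg Subtype.val this)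

theorem ZLattice.vadd_subset_closedBall {D : Set E} {ρ r : ℝ} (hDρ : D ⊆ closedBall 0 ρ) {g : Λ}
    (hg : ‖(g : E)‖ ≤ r) : g +ᵥ D ⊆ closedBall 0 (r + ρ) := by
  rintro _ ⟨y, hy, rfl⟩
  rw [mem_closedBall_zero_iff]
  exact (norm_add_le _ _).trans (add_le_add hg (mem_closedBall_zero_iff.1 (hDρ hy)))

variable [NormedSpace ℝ E] [FiniteDimensional ℝ E] [DiscreteTopology Λ]

theorem ZLattice.finite_setOf_mem_norm_le (r : ℝ) : {v : E | v ∈ Λ ∧ ‖v‖ ≤ r}.Finite := by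
  have : DiscreteTopology Λ.toAddSubgroup := ‹DiscreteTopology Λ›
  refine (Metric.finite_isBounded_inter_isClosed DiscreteTopology.isDiscrete
    (isBounded_closedBall (x := 0) (r := r))
    (AddSubgroup.isClosed_of_discrete (H := Λ.toAddSubgroup))).subset ?_
  rintro v ⟨hv, hvr⟩
  exact ⟨mem_closedBall_zero_iff.2 hvr, hv⟩

theorem ZLattice.ncard_setOf_mem_norm_le_eq_add_one {r : ℝ} (hr : 0 ≤ r) :
    {v | v ∈ Λ ∧ ‖v‖ ≤ r}.ncard = {v | (v ∈ Λ ∧ v ≠ 0) ∧ ‖v‖ ≤ r}.ncard + 1 := by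
  have hins : {v | v ∈ Λ ∧ ‖v‖ ≤ r} = insert 0 {v | (v ∈ Λ ∧ v ≠ 0) ∧ ‖v‖ ≤ r} := by
    ext v
    by_cases hv : v = 0 <;> simp [hv, hr]
  rw [hins, ncard_insert_of_notMem (fun h => h.1.2 rfl)
    ((finite_setOf_mem_norm_le Λ r).subset fun v hv => ⟨hv.1.1, hv.2⟩)]

variable [MeasurableSpace E] [BorelSpace E] (μ : Measure E) [μ.IsAddHaarMeasure] [IsZLattice ℝ Λ]

theorem ZLattice.card_mul_measure_le_measure_closedBall {D : Set E}
    (hD : IsAddFundamentalDomain Λ D μ) {ρ r : ℝ} (hDρ : D ⊆ closedBall 0 ρ) {P : Finset Λ}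
    (hP : ∀ g ∈ P, ‖(g : E)‖ ≤ r) :
    (#P : ℝ≥0∞) * μ D ≤ μ (closedBall 0 (r + ρ)) := by
  rw [hD.measure_eq_tsum' (closedBall 0 (r + ρ))]
  calc (#P : ℝ≥0∞) * μ D = ∑ g ∈ P, μ (closedBall 0 (r + ρ) ∩ (g +ᵥ D)) := by
        rw [Finset.sum_congr rfl fun g hg => ?_, Finset.sum_const, nsmul_eq_mul]
        rw [inter_eq_right.2 (vadd_subset_closedBall Λ hDρ (hP g hg)), measure_vadd]
    _ ≤ ∑' g : Λ, μ (closedBall 0 (r + ρ) ∩ (g +ᵥ D)) := ENNReal.sum_le_tsum _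

theorem ZLattice.measure_ball_le_card_mul {D : Set E} (hD : IsAddFundamentalDomain Λ D μ)
    {ρ r : ℝ} (hDρ : D ⊆ closedBall 0 ρ) {P : Finset Λ} (hP : ∀ g : Λ, ‖(g : E)‖ ≤ r → g ∈ P) :
    μ (ball 0 (r - ρ)) ≤ (#P : ℝ≥0∞) * μ D := by
  have hzero : ∀ g ∉ P, μ (ball 0 (r - ρ) ∩ (g +ᵥ D)) = 0 := by
    intro g hg
    rw [eq_empty_of_forall_notMem (s := ball 0 (r - ρ) ∩ (g +ᵥ D)), measure_empty]
    rintro _ ⟨hx, y, hy, rfl⟩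
    have hgy : ‖(g : E) + y‖ < r - ρ := mem_ball_zero_iff.1 hx
    have hg' : ‖(g : E)‖ ≤ ‖(g : E) + y‖ + ‖y‖ := by simpa using norm_sub_le ((g : E) + y) y
    exact hg (hP g (by linarith [mem_closedBall_zero_iff.1 (hDρ hy)]))
  rw [hD.measure_eq_tsum' (ball 0 (r - ρ)), tsum_eq_sum hzero, ← nsmul_eq_mul,
    ← Finset.sum_const]
  exact Finset.sum_le_sum fun g _ => (measure_mono inter_subset_right).trans (measure_vadd ..).le

theorem ZLattice.measure_ball_le_ncard_mul_le_measure_closedBall {D : Set E}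
    (hD : IsAddFundamentalDomain Λ D μ) {ρ : ℝ} (hDρ : D ⊆ closedBall 0 ρ) (r : ℝ) :
    μ (ball 0 (r - ρ)) ≤ ({v | v ∈ Λ ∧ ‖v‖ ≤ r}.ncard : ℝ≥0∞) * μ D ∧
      ({v | v ∈ Λ ∧ ‖v‖ ≤ r}.ncard : ℝ≥0∞) * μ D ≤ μ (closedBall 0 (r + ρ)) := by
  have hfin := (finite_setOf_mem_norm_le Λ r).preimage
    (Subtype.val_injective (p := (· ∈ Λ))).injOn
  have hcard : #hfin.toFinset = {v | v ∈ Λ ∧ ‖v‖ ≤ r}.ncard := by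
    rw [← ncard_eq_toFinset_card _ hfin,
      ncard_preimage_of_injective_subset_range Subtype.val_injective]
    exact fun v hv => ⟨⟨v, hv.1⟩, rfl⟩
  rw [← hcard]
  exact ⟨measure_ball_le_card_mul Λ μ hD hDρ fun g hg => by simpa using hg,
    card_mul_measure_le_measure_closedBall Λ μ hD hDρ fun g hg => by simpa using hg⟩

theorem ZLattice.isBigO_ncard_sub_mul_rpow [Nontrivial E] :
    (fun t => ({v | v ∈ Λ ∧ ‖v‖ ≤ t}.ncard : ℝ)
        - μ.real (ball 0 1) / covolume Λ μ * t ^ (finrank ℝ E : ℝ))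
      =O[atTop] fun t => t ^ ((finrank ℝ E : ℝ) - 1) := by
  set d := finrank ℝ E
  have hD := isAddFundamentalDomain (Free.chooseBasis ℤ Λ) μ
  set D := ZSpan.fundamentalDomain ((Free.chooseBasis ℤ Λ).ofZLatticeBasis ℝ)
  obtain ⟨ρ, hρ, hDρ⟩ := (ZSpan.fundamentalDomain_isBounded
    ((Free.chooseBasis ℤ Λ).ofZLatticeBasis ℝ)).subset_closedBall_lt 0 0
  have hDfin : μ D ≠ ⊤ := (measure_mono hDρ).trans_lt measure_closedBall_lt_top |>.ne
  have hDpos : 0 < μ.real D := ENNReal.toReal_pos (hD.measure_ne_zero (NeZero.ne μ)) hDfin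
  have hball : ∀ r, 0 ≤ r → μ.real (ball 0 r) = r ^ d * μ.real (ball 0 1) := fun r hr => by
    rw [measureReal_def, Measure.addHaar_ball μ 0 hr, ENNReal.toReal_mul,
      ENNReal.toReal_ofReal (by positivity), measureReal_def]
  have hbounds := measure_ball_le_ncard_mul_le_measure_closedBall Λ μ hD hDρ
  rw [covolume_eq_measure_fundamentalDomain Λ μ hD]
  refine isBigO_sub_mul_pow_of_le_of_le finrank_pos (by positivity) hρ.le ?_ ?_
  · filter_upwards [eventually_ge_atTop ρ] with t ht
    have h := ENNReal.toReal_mono (ENNReal.mul_ne_top (ENNReal.natCast_ne_top _) hDfin)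
      (hbounds t).1
    rw [ENNReal.toReal_mul, ENNReal.toReal_natCast, ← measureReal_def, ← measureReal_def,
      hball _ (sub_nonneg.2 ht)] at h
    rw [div_mul_eq_mul_div, div_le_iff₀ hDpos, mul_comm]
    exact h
  · filter_upwards [eventually_ge_atTop 0] with t ht
    have h := ENNReal.toReal_mono measure_closedBall_lt_top.ne (hbounds t).2
    rw [ENNReal.toReal_mul, ENNReal.toReal_natCast, ← measureReal_def, ← measureReal_def,
      Measure.addHaar_real_closedBall μ 0 (by positivity)] at h
    rw [div_mul_eq_mul_div, le_div_iff₀ hDpos, mul_comm (μ.real _)]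
    exact h

theorem ZLattice.exists_tendsto_finsum_norm_rpow_neg_sub_log [Nontrivial E] :
    ∃ L, Tendsto (fun R =>
      (∑ᶠ (v : E) (_ : v ∈ Λ ∧ v ≠ 0 ∧ ‖v‖ ≤ R), ‖v‖ ^ (-(finrank ℝ E : ℝ)))
        - finrank ℝ E * (μ.real (ball 0 1) / covolume Λ μ) * log R) atTop (𝓝 L) := by
  set N : ℝ → ℝ := fun t => ({v | (v ∈ Λ ∧ v ≠ 0) ∧ ‖v‖ ≤ t}.ncard : ℝ)
  have hfin : ∀ t, {v | (v ∈ Λ ∧ v ≠ 0) ∧ ‖v‖ ≤ t}.Finite := fun t =>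
    (finite_setOf_mem_norm_le Λ t).subset fun v hv => ⟨hv.1.1, hv.2⟩
  have hN : Monotone N := fun s t hst =>
    Nat.cast_le.2 (ncard_le_ncard (fun v hv => ⟨hv.1, hv.2.trans hst⟩) (hfin t))
  have hone : (fun _ : ℝ => (1 : ℝ)) =O[atTop] fun t => t ^ ((finrank ℝ E : ℝ) - 1) := by
    refine IsBigO.of_bound 1 ?_
    filter_upwards [eventually_ge_atTop 1] with t ht
    rw [norm_one, one_mul, norm_of_nonneg (by positivity)]
    exact one_le_rpow ht (sub_nonneg.2 (Nat.one_le_cast.2 finrank_pos))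
  have hO := ((isBigO_ncard_sub_mul_rpow Λ μ).sub hone).congr' (f₂ := fun t =>
    N t - μ.real (ball 0 1) / covolume Λ μ * t ^ (finrank ℝ E : ℝ)) (by
      filter_upwards [eventually_ge_atTop 0] with t ht
      simp only [N, ncard_setOf_mem_norm_le_eq_add_one Λ ht, Nat.cast_add, Nat.cast_one]
      ring) EventuallyEq.rfl
  obtain ⟨r₀, hr₀, hmin⟩ := exists_pos_forall_lt_norm Λ
  obtain ⟨L, hL⟩ := exists_tendsto_add_integral_sub_log hr₀ hN hO
  refine ⟨L, hL.congr' ?_⟩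
  filter_upwards [eventually_ge_atTop r₀] with R hR
  rw [← finsum_rpow_neg_eq_add_integral hr₀ (fun v hv => hmin v hv.1 hv.2) hR (hfin R)]
  simp only [and_assoc]

end Lattice

theorem two_mul_pi_rpow_div_Gamma_eq (d : ℕ) :
    2 * π ^ ((d : ℝ) / 2) / Gamma ((d : ℝ) / 2) = d * (√π ^ d / Gamma ((d : ℝ) / 2 + 1)) := by
  rcases Nat.eq_zero_or_pos d with rfl | hd
  · simp
  rw [Gamma_add_one (by positivity), sqrt_eq_rpow, ← rpow_natCast, ← rpow_mul pi_pos.le]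
  have : Gamma ((d : ℝ) / 2) ≠ 0 := (Gamma_pos_of_pos (by positivity)).ne'
  field_simp

theorem EuclideanSpace.volume_real_ball_zero_one (d : ℕ) [NeZero d] :
    volume.real (ball (0 : EuclideanSpace ℝ (Fin d)) 1) = √π ^ d / Gamma ((d : ℝ) / 2 + 1) := by
  rw [measureReal_def, InnerProductSpace.volume_ball, finrank_euclideanSpace_fin]
  simp only [ENNReal.ofReal_one, one_pow, one_mul]
  exact ENNReal.toReal_ofReal (by positivity)

/-- **Lattice sum asymptotics.** Let `Λ ⊆ ℝ^d` be a full-rank lattice of covolume `1`.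
Then there is a constant `γ(Λ)` such that, as `R → ∞`,
`∑_{v ∈ Λ, 0 < ‖v‖ ≤ R} ‖v‖⁻ᵈ = (2 π^{d/2} / Γ(d/2)) (log R + γ(Λ)) + o(1)`. -/
theorem lattice_sum_asymptotics (d : ℕ) (hd : 1 ≤ d)
    (Λ : Submodule ℤ (EuclideanSpace ℝ (Fin d)))
    [DiscreteTopology Λ] [IsZLattice ℝ Λ]
    (hcov : ZLattice.covolume Λ = 1) :
    ∃ γΛ : ℝ, Tendsto
      (fun R : ℝ =>
        (∑ᶠ (v : EuclideanSpace ℝ (Fin d)) (_ : v ∈ Λ ∧ v ≠ 0 ∧ ‖v‖ ≤ R),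
          ‖v‖ ^ (-(d : ℝ)))
        - (2 * π ^ ((d : ℝ) / 2) / Real.Gamma ((d : ℝ) / 2)) * (Real.log R + γΛ))
      atTop (nhds 0) := by
  have : NeZero d := ⟨by omega⟩
  obtain ⟨L, hL⟩ := ZLattice.exists_tendsto_finsum_norm_rpow_neg_sub_log Λ volume
  rw [finrank_euclideanSpace_fin, hcov, div_one, EuclideanSpace.volume_real_ball_zero_one,
    ← two_mul_pi_rpow_div_Gamma_eq] at hL
  set C := 2 * π ^ ((d : ℝ) / 2) / Gamma ((d : ℝ) / 2)
  have hC : C ≠ 0 := (div_pos (by positivity) (Gamma_pos_of_pos (by positivity))).ne'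
  refine ⟨L / C, ?_⟩
  refine (sub_self L ▸ hL.sub_const L).congr fun R => ?_
  rw [mul_add, mul_div_cancel₀ _ hC]
  ring
end

section
/- Let d ∈ ℝ and let (ρ_n)_{n ∈ ℕ} be a sequence of complex numbers with ρ_n ≠ d/2 and Re ρ_n ≤ d/2 for all n, such that Σ_n (d − 2 Re ρ_n)/|ρ_n − d/2|² < ∞. Then for every ε > 0: (i) for every T > 0 the set {n : Re ρ_n ≤ d/2 − ε and |ρ_n − d/2| ≤ T} is finite, and (ii) its cardinality is o(T²) as T → ∞, i.e. #{n : Re ρ_n ≤ d/2 − ε, |ρ_n − d/2| ≤ T} / T² → 0. -/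
open Filter Complex Topology

/-!
Write `c n = (d - 2 Re ρₙ) / |ρₙ - d/2|²`. A resonance counted at height `T` has
`c n ≥ 2ε / T²`, so with `a = 2ε / T²` the count divided by `T²` is at most
`(2ε)⁻¹ · a · #{n | a ≤ |c n|}`. For a summable sequence,
`a · #{n | a ≤ |c n|} = ∑' n, a · 1[a ≤ |c n|]` tends to `0` as `a → 0⁺` by dominated
convergence, the terms being bounded by `|c n|`.
-/

theorem Set.mul_ncard_eq_tsum_indicator {ι : Type*} (s : Set ι) (a : ℝ) :
    a * s.ncard = ∑' i, s.indicator (fun _ => a) i := by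
  rw [← tsum_subtype, tsum_const, Nat.card_coe_set_eq, nsmul_eq_mul, mul_comm]

namespace Summable

variable {ι : Type*} {f : ι → ℝ}

theorem finite_setOf_le_abs (hf : Summable f) {a : ℝ} (ha : 0 < a) : {i | a ≤ |f i|}.Finite := by
  have h := hf.abs.tendsto_cofinite_zero.eventually (gt_mem_nhds ha)
  simpa only [eventually_cofinite, not_lt] using h

theorem tendsto_mul_ncard_setOf_le_abs (hf : Summable f) :
    Tendsto (fun a : ℝ => a * {i | a ≤ |f i|}.ncard) (𝓝[>] 0) (𝓝 0) := by
  simp_rw [Set.mul_ncard_eq_tsum_indicator]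
  rw [show (𝓝 0 : Filter ℝ) = 𝓝 (∑' _ : ι, 0) by rw [tsum_zero]]
  refine tendsto_tsum_of_dominated_convergence hf.abs (fun i => ?_) ?_
  · exact squeeze_zero_norm (fun a => norm_indicator_le_norm_self _ _)
      (tendsto_norm_zero.mono_left nhdsWithin_le_nhds)
  · filter_upwards [self_mem_nhdsWithin] with a (ha : 0 < a) i
    rw [Real.norm_eq_abs, Set.indicator_apply]
    split_ifs with hi
    · rwa [abs_of_pos ha]
    · simp

end Summable

theorem two_mul_div_sq_le_div_norm_sub_sq {d ε T : ℝ} (hε : 0 < ε) {z : ℂ}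
    (hre : z.re ≤ d / 2 - ε) (hT : ‖z - (d / 2 : ℂ)‖ ≤ T) :
    2 * ε / T ^ 2 ≤ (d - 2 * z.re) / ‖z - (d / 2 : ℂ)‖ ^ 2 := by
  have hpos : 0 < ‖z - (d / 2 : ℂ)‖ := by
    calc (0 : ℝ) < d / 2 - z.re := by linarith
      _ ≤ |(z - (d / 2 : ℂ)).re| := by
        rw [sub_re, div_ofNat_re, ofReal_re, abs_sub_comm]
        exact le_abs_self _
      _ ≤ _ := abs_re_le_norm _
  gcongr
  all_goals linarith

theorem resonances_off_critical_line_little_o_general (d : ℝ) (ρ : ℕ → ℂ)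
    (hsum : Summable fun n => (d - 2 * (ρ n).re) / ‖ρ n - (d / 2 : ℂ)‖ ^ 2)
    (ε : ℝ) (hε : 0 < ε) :
    (∀ T : ℝ, 0 < T →
        {n : ℕ | (ρ n).re ≤ d / 2 - ε ∧ ‖ρ n - (d / 2 : ℂ)‖ ≤ T}.Finite) ∧
      Tendsto
        (fun T : ℝ =>
          (({n : ℕ | (ρ n).re ≤ d / 2 - ε ∧
              ‖ρ n - (d / 2 : ℂ)‖ ≤ T}.ncard : ℝ)) / T ^ 2)
        atTop (nhds 0) := by
  set c : ℕ → ℝ := fun n => (d - 2 * (ρ n).re) / ‖ρ n - (d / 2 : ℂ)‖ ^ 2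
  set S : ℝ → Set ℕ := fun T => {n | (ρ n).re ≤ d / 2 - ε ∧ ‖ρ n - (d / 2 : ℂ)‖ ≤ T}
  have hS (T : ℝ) : S T ⊆ {n | 2 * ε / T ^ 2 ≤ |c n|} := fun n hn =>
    (two_mul_div_sq_le_div_norm_sub_sq hε hn.1 hn.2).trans (le_abs_self _)
  have hfin (T : ℝ) (hT : 0 < T) : {n | 2 * ε / T ^ 2 ≤ |c n|}.Finite :=
    hsum.finite_setOf_le_abs (by positivity)
  refine ⟨fun T hT => (hfin T hT).subset (hS T), ?_⟩
  have ha : Tendsto (fun T : ℝ => 2 * ε / T ^ 2) atTop (𝓝[>] 0) :=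
    tendsto_nhdsWithin_iff.2 ⟨tendsto_const_nhds.div_atTop (tendsto_pow_atTop two_ne_zero),
      (eventually_gt_atTop 0).mono fun T hT => by simp only [Set.mem_Ioi]; positivity⟩
  have hlim := (hsum.tendsto_mul_ncard_setOf_le_abs.comp ha).const_mul (2 * ε)⁻¹
  rw [mul_zero] at hlim
  refine squeeze_zero' (Eventually.of_forall fun T => by positivity) ?_ hlim
  filter_upwards [eventually_gt_atTop 0] with T hT
  calc ((S T).ncard : ℝ) / T ^ 2 ≤ ({n | 2 * ε / T ^ 2 ≤ |c n|}.ncard : ℝ) / T ^ 2 := by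
        gcongr
        exacts [hfin T hT, hS T]
    _ = _ := by
        rw [Function.comp_apply, ← mul_assoc, div_eq_inv_mul]
        congr 1
        field_simp

/-- Let `d ∈ ℝ` and `(ρ_n)` be complex numbers with `ρ_n ≠ d/2`, `Re ρ_n ≤ d/2`, and
`∑ (d - 2 Re ρ_n)/|ρ_n - d/2|² < ∞`. Then for every `ε > 0`: (i) for every `T > 0` the set
of `n` with `Re ρ_n ≤ d/2 - ε` and `|ρ_n - d/2| ≤ T` is finite, and (ii) its cardinality
is `o(T²)` as `T → ∞`. -/
theorem resonances_off_critical_line_little_o (d : ℝ) (ρ : ℕ → ℂ)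
    (hne : ∀ n, ρ n ≠ (d / 2 : ℂ)) (hre : ∀ n, (ρ n).re ≤ d / 2)
    (hsum : Summable fun n => (d - 2 * (ρ n).re) / ‖ρ n - (d / 2 : ℂ)‖ ^ 2)
    (ε : ℝ) (hε : 0 < ε) :
    (∀ T : ℝ, 0 < T →
        {n : ℕ | (ρ n).re ≤ d / 2 - ε ∧ ‖ρ n - (d / 2 : ℂ)‖ ≤ T}.Finite) ∧
      Tendsto
        (fun T : ℝ =>
          (({n : ℕ | (ρ n).re ≤ d / 2 - ε ∧
              ‖ρ n - (d / 2 : ℂ)‖ ≤ T}.ncard : ℝ)) / T ^ 2)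
        atTop (nhds 0) :=
  resonances_off_critical_line_little_o_general d ρ hsum ε hε
end
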